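/- arXiv:2012.00183 — 5 statements merged into one kernel-verified Lean document; each statement's English description precedes it below -/
import Mathlib

section
/- Let C = {x : Bx = d} be an affine subspace of E (B a linear map from E to F) and let D ⊆ E be a closed convex cone. If C ∩ int(D) ≠ ∅ and C ∩ D is compact, then there exist constants γ, γ' > 0 such that for all x ∈ E, dist(x, C ∩ D) ≤ γ‖Bx − d‖ + γ' · dist(x, D). -/
open Metric

private lemma infDist_smul_le_aux {E : Type*} [NormedAddCommGroup E] [NormedSpace ℝ E]
    {D : Set E} (hne : D.Nonempty)
    (hDcone : ∀ x ∈ D, ∀ c : ℝ, 0 ≤ c → c • x ∈ D)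
    {t : ℝ} (ht : 0 < t) (u : E) :
    infDist (t • u) D ≤ t * infDist u D := by
  refine le_of_forall_pos_le_add fun ε hε => ?_
  have h : infDist u D < infDist u D + ε / t := by
    have : 0 < ε / t := div_pos hε ht
    linarith
  obtain ⟨z, hz, hdz⟩ := (infDist_lt_iff hne).1 h
  have h1 : infDist (t • u) D ≤ dist (t • u) (t • z) :=
    infDist_le_dist_of_mem (hDcone z hz t ht.le)
  have h2 : dist (t • u) (t • z) = t * dist u z := by
    rw [dist_eq_norm, dist_eq_norm, ← smul_sub, norm_smul, Real.norm_of_nonneg ht.le]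
  have h3 : t * dist u z ≤ t * (infDist u D + ε / t) :=
    mul_le_mul_of_nonneg_left hdz.le ht.le
  have h4 : t * (infDist u D + ε / t) = t * infDist u D + ε := by
    rw [mul_add, mul_div_cancel₀ _ ht.ne']
  linarith

set_option maxHeartbeats 1000000 in
set_option synthInstance.maxHeartbeats 400000 in
theorem stmt2 {E F : Type*} [NormedAddCommGroup E] [InnerProductSpace ℝ E]
    [FiniteDimensional ℝ E] [NormedAddCommGroup F] [InnerProductSpace ℝ F]
    [FiniteDimensional ℝ F]
    (B : E →L[ℝ] F) (d : F) (D : Set E)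
    (hDclosed : IsClosed D) (hDconv : Convex ℝ D)
    (hDcone : ∀ x ∈ D, ∀ c : ℝ, 0 ≤ c → c • x ∈ D)
    (hint : ({x | B x = d} ∩ interior D).Nonempty)
    (hcpt : IsCompact ({x | B x = d} ∩ D)) :
    ∃ γ > (0 : ℝ), ∃ γ' > (0 : ℝ), ∀ x : E,
      Metric.infDist x ({x | B x = d} ∩ D) ≤
        γ * ‖B x - d‖ + γ' * Metric.infDist x D := by
  classical
  obtain ⟨x₀, hx₀C, hx₀int⟩ := hint
  set C : Set E := {x | B x = d} with hC
  have hBx₀ : B x₀ = d := hx₀C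
  have hx₀D : x₀ ∈ D := interior_subset hx₀int
  have hx₀K : x₀ ∈ C ∩ D := ⟨hx₀C, hx₀D⟩
  have hDne : D.Nonempty := ⟨x₀, hx₀D⟩
  have hCne : C.Nonempty := ⟨x₀, hx₀C⟩
  have hCclosed : IsClosed C := isClosed_eq B.continuous continuous_const
  rcases subsingleton_or_nontrivial E with hE | hE
  · refine ⟨1, one_pos, 1, one_pos, fun x => ?_⟩
    have hx : x = x₀ := Subsingleton.elim x x₀
    rw [hx, infDist_zero_of_mem hx₀K]
    have h1 : (0:ℝ) ≤ ‖B x₀ - d‖ := norm_nonneg _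
    have h2 : (0:ℝ) ≤ infDist x₀ D := infDist_nonneg
    linarith
  -- cone is closed under addition
  have hadd : ∀ a ∈ D, ∀ b ∈ D, a + b ∈ D := by
    intro a ha b hb
    have hmid : (1/2 : ℝ) • a + (1/2 : ℝ) • b ∈ D :=
      hDconv ha hb (by norm_num) (by norm_num) (by norm_num)
    have h2 : (2:ℝ) • ((1/2 : ℝ) • a + (1/2 : ℝ) • b) ∈ D :=
      hDcone _ hmid 2 (by norm_num)
    have heq : (2:ℝ) • ((1/2 : ℝ) • a + (1/2 : ℝ) • b) = a + b := by
      rw [smul_add, smul_smul, smul_smul]; norm_num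
    rwa [heq] at h2
  -- ker B ∩ D = {0}
  have hker : ∀ u : E, B u = 0 → u ∈ D → u = 0 := by
    intro u hBu huD
    by_contra hu
    obtain ⟨M, hM⟩ := hcpt.isBounded.subset_closedBall 0
    have hnu : 0 < ‖u‖ := norm_pos_iff.2 hu
    set t : ℝ := (M + ‖x₀‖ + 1) / ‖u‖ with ht_def
    have hMx : ‖x₀‖ ≤ M := by
      have := hM hx₀K
      simpa [mem_closedBall, dist_eq_norm] using this
    have ht : 0 ≤ t := div_nonneg (by linarith [norm_nonneg x₀]) hnu.le
    have htu : t • u ∈ D := hDcone u huD t ht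
    have hsum : x₀ + t • u ∈ D := hadd _ hx₀D _ htu
    have hmemK : x₀ + t • u ∈ C ∩ D := by
      refine ⟨?_, hsum⟩
      show B (x₀ + t • u) = d
      rw [map_add, map_smul, hBu, hBx₀, smul_zero, add_zero]
    have hle : ‖x₀ + t • u‖ ≤ M := by
      have := hM hmemK
      simpa [mem_closedBall, dist_eq_norm] using this
    have hnorm : ‖t • u‖ = M + ‖x₀‖ + 1 := by
      rw [norm_smul, Real.norm_of_nonneg ht, ht_def]
      field_simp
    have htri : ‖t • u‖ ≤ ‖x₀ + t • u‖ + ‖x₀‖ := by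
      have h := norm_sub_le (x₀ + t • u) x₀
      have heq : x₀ + t • u - x₀ = t • u := by abel
      rwa [heq] at h
    linarith
  -- Hoffman bound for the affine part
  obtain ⟨g, hg⟩ := (B.toLinearMap.rangeRestrict).exists_rightInverse_of_surjective
      (LinearMap.range_rangeRestrict _)
  set G := LinearMap.toContinuousLinearMap g with hG
  set κ := ‖G‖ with hκ
  have hκ0 : 0 ≤ κ := hκ ▸ norm_nonneg G
  have hmemrange : ∀ x : E, B x - d ∈ LinearMap.range B.toLinearMap := by
    intro x
    exact ⟨x - x₀, by simp [map_sub, hBx₀]⟩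
  have hHoff : ∀ x : E, infDist x C ≤ κ * ‖B x - d‖ := by
    intro x
    set y : ↥(LinearMap.range B.toLinearMap) := ⟨B x - d, hmemrange x⟩ with hy
    have hBv : B (g y) = B x - d := by
      have h1 := LinearMap.congr_fun hg y
      have h2 := congrArg Subtype.val h1
      simpa [hy] using h2
    have hxv : x - g y ∈ C := by
      show B (x - g y) = d
      rw [map_sub, hBv]
      abel
    have h5 : infDist x C ≤ dist x (x - g y) := infDist_le_dist_of_mem hxv
    have h6 : dist x (x - g y) = ‖g y‖ := by
      rw [dist_eq_norm]
      congr 1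
      abel
    have h7 : ‖g y‖ = ‖G y‖ := rfl
    have h8 : ‖G y‖ ≤ κ * ‖y‖ := G.le_opNorm y
    have h9 : ‖y‖ = ‖B x - d‖ := by rw [Submodule.coe_norm]
    rw [h6, h7] at h5
    rw [h9] at h8
    linarith
  -- coercivity: ε
  have hScpt : IsCompact (sphere (0:E) 1) := isCompact_sphere 0 1
  have hSne : (sphere (0:E) 1).Nonempty := NormedSpace.sphere_nonempty.2 zero_le_one
  have hcont : Continuous fun u : E => ‖B u‖ + infDist u D :=
    (B.continuous.norm).add (continuous_infDist_pt D)
  obtain ⟨u₀, hu₀S, hmin⟩ := hScpt.exists_isMinOn hSne hcont.continuousOn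
  set ε := ‖B u₀‖ + infDist u₀ D with hεdef
  have hε : 0 < ε := by
    rcases lt_or_ge 0 ε with h | h
    · exact h
    · exfalso
      have h1 : 0 ≤ ‖B u₀‖ := norm_nonneg _
      have h2 : 0 ≤ infDist u₀ D := infDist_nonneg
      have hB0 : ‖B u₀‖ = 0 := by linarith
      have hd0 : infDist u₀ D = 0 := by linarith
      have hu₀D : u₀ ∈ D := (hDclosed.mem_iff_infDist_zero hDne).2 hd0
      have hu₀0 : u₀ = 0 := hker u₀ (norm_eq_zero.1 hB0) hu₀D
      have : ‖u₀‖ = 1 := by simpa [mem_sphere, dist_eq_norm] using hu₀S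
      rw [hu₀0] at this
      simp at this
  have hcoerc : ∀ u : E, ε * ‖u‖ ≤ ‖B u‖ + infDist u D := by
    intro u
    rcases eq_or_ne u 0 with rfl | hu
    · simp only [norm_zero, mul_zero, map_zero, zero_add]
      have h2 : (0:ℝ) ≤ infDist (0:E) D := infDist_nonneg
      linarith
    · have hnu : 0 < ‖u‖ := norm_pos_iff.2 hu
      have hv : (‖u‖⁻¹) • u ∈ sphere (0:E) 1 := by
        simp only [mem_sphere, dist_zero_right, norm_smul, norm_inv, norm_norm]
        exact inv_mul_cancel₀ hnu.ne'
      have h1 : ε ≤ ‖B ((‖u‖⁻¹) • u)‖ + infDist ((‖u‖⁻¹) • u) D := hmin hv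
      have h2 : infDist ((‖u‖⁻¹) • u) D ≤ ‖u‖⁻¹ * infDist u D :=
        infDist_smul_le_aux hDne hDcone (inv_pos.2 hnu) u
      have h3 : ‖B ((‖u‖⁻¹) • u)‖ = ‖u‖⁻¹ * ‖B u‖ := by
        rw [map_smul, norm_smul, Real.norm_of_nonneg (inv_pos.2 hnu).le]
      rw [h3] at h1
      have h4 : ε ≤ ‖u‖⁻¹ * ‖B u‖ + ‖u‖⁻¹ * infDist u D := by linarith
      have h5 := mul_le_mul_of_nonneg_right h4 hnu.le
      calc ε * ‖u‖ ≤ (‖u‖⁻¹ * ‖B u‖ + ‖u‖⁻¹ * infDist u D) * ‖u‖ := h5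
        _ = ‖B u‖ + infDist u D := by field_simp
  -- interior ball
  obtain ⟨r, hr, hball⟩ := Metric.isOpen_iff.1 isOpen_interior x₀ hx₀int
  set ρ := r / 2 with hρdef
  have hρ : 0 < ρ := by positivity
  have hclos : closedBall x₀ ρ ⊆ D := by
    intro z hz
    have : z ∈ ball x₀ r := by
      rw [mem_closedBall] at hz
      rw [mem_ball]
      linarith
    exact interior_subset (hball this)
  -- constants
  set R := 2 * ‖x₀‖ / ε with hRdef
  have hR0 : 0 ≤ R := by positivity
  set tc := 2 * R / ρ with htcdef
  have htc0 : 0 ≤ tc := by positivity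
  set sc := 2 / ε with hscdef
  have hsc0 : 0 ≤ sc := by positivity
  set A := (1 + tc) * (κ + 1) + sc + 1 with hAdef
  have hA0 : 0 < A := by positivity
  have hA1 : (1 + tc) * κ ≤ A := by nlinarith
  have hA2 : tc ≤ A := by nlinarith
  have hA3 : κ ≤ A := by nlinarith
  have hA4 : sc ≤ A := by nlinarith
  refine ⟨A, hA0, A, hA0, fun x => ?_⟩
  set a := ‖B x - d‖ with hadef
  have ha0 : 0 ≤ a := norm_nonneg _
  set δ := infDist x D with hδdef
  have hδ0 : 0 ≤ δ := infDist_nonneg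
  set n := ‖x - x₀‖ with hndef
  have hn0 : 0 ≤ n := norm_nonneg _
  rcases le_or_gt n R with hcase | hcase
  · -- Robinson argument near the compact set
    obtain ⟨p, hpC, hp⟩ := hCclosed.exists_infDist_eq_dist hCne x
    set c := infDist x C with hcdef
    have hc0 : 0 ≤ c := infDist_nonneg
    have hcκ : c ≤ κ * a := hHoff x
    have hcn : c ≤ n := by
      have h0 : infDist x C ≤ dist x x₀ := infDist_le_dist_of_mem hx₀C
      rwa [dist_eq_norm] at h0
    obtain ⟨q, hqD, hq⟩ := hDclosed.exists_infDist_eq_dist hDne p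
    set δ' := infDist p D with hδ'def
    have hδ'0 : 0 ≤ δ' := infDist_nonneg
    have hδ'le : δ' ≤ δ + c := by
      have h1 : infDist p D ≤ infDist x D + dist p x := infDist_le_infDist_add_dist
      rw [dist_comm] at h1
      rw [← hp] at h1
      linarith
    rcases eq_or_lt_of_le hδ'0 with hδ'z | hδ'pos
    · -- p is already in D
      have hpD : p ∈ D := (hDclosed.mem_iff_infDist_zero hDne).2 hδ'z.symm
      have hle : infDist x (C ∩ D) ≤ c := hp ▸ infDist_le_dist_of_mem ⟨hpC, hpD⟩
      have h12 : κ * a ≤ A * a := mul_le_mul_of_nonneg_right hA3 ha0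
      have h13 : 0 ≤ A * δ := mul_nonneg hA0.le hδ0
      linarith
    · set lam := δ' / (δ' + ρ) with hlamdef
      have hlam0 : 0 ≤ lam := by positivity
      have hlam1 : lam ≤ 1 := by
        rw [hlamdef, div_le_one (by linarith)]
        linarith
      set w := x₀ + (ρ / δ') • (p - q) with hwdef
      have hwD : w ∈ D := by
        apply hclos
        rw [mem_closedBall, dist_eq_norm]
        have : w - x₀ = (ρ / δ') • (p - q) := by rw [hwdef]; abel
        rw [this, norm_smul, Real.norm_of_nonneg (by positivity : (0:ℝ) ≤ ρ / δ')]
        have hpq : ‖p - q‖ = δ' := by rw [hq, dist_eq_norm]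
        rw [hpq]
        rw [div_mul_cancel₀ _ hδ'pos.ne']
      set y := lam • x₀ + (1 - lam) • p with hydef
      have hkey : lam * (ρ / δ') = 1 - lam := by
        rw [hlamdef]
        field_simp
        ring
      have hyD : y ∈ D := by
        have hconv : (1 - lam) • q + lam • w ∈ D :=
          hDconv hqD hwD (by linarith) hlam0 (by ring)
        have heq : (1 - lam) • q + lam • w = y := by
          rw [hwdef, hydef, smul_add, smul_smul, hkey, smul_sub]
          abel
        rwa [heq] at hconv
      have hyC : y ∈ C := by
        show B y = d
        have hpd : B p = d := hpC
        rw [hydef, map_add, map_smul, map_smul, hBx₀, hpd, ← add_smul]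
        simp
      have hpyval : p - y = lam • (p - x₀) := by
        rw [hydef, smul_sub, sub_smul, one_smul]
        abel
      have hdistpy : dist p y = lam * ‖p - x₀‖ := by
        rw [dist_eq_norm, hpyval, norm_smul, Real.norm_of_nonneg hlam0]
      have hpx₀ : ‖p - x₀‖ ≤ c + n := by
        have h1 : p - x₀ = (p - x) + (x - x₀) := by abel
        have h2 : ‖(p - x) + (x - x₀)‖ ≤ ‖p - x‖ + ‖x - x₀‖ := norm_add_le _ _
        have h3 : ‖p - x‖ = c := by rw [hp, dist_eq_norm, norm_sub_rev]
        rw [h3] at h2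
        rw [h1]
        linarith [h2, hndef]
      have hxy : dist x y ≤ c + lam * (c + n) := by
        have hmul : lam * ‖p - x₀‖ ≤ lam * (c + n) := mul_le_mul_of_nonneg_left hpx₀ hlam0
        calc dist x y ≤ dist x p + dist p y := dist_triangle x p y
          _ = c + lam * ‖p - x₀‖ := by rw [← hp, hdistpy]
          _ ≤ c + lam * (c + n) := by linarith
      have hlamle : lam ≤ δ' / ρ := by
        rw [hlamdef]
        exact div_le_div_of_nonneg_left hδ'0 hρ (by linarith)
      have hmain : infDist x (C ∩ D) ≤ c + lam * (c + n) := by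
        have h14 : infDist x (C ∩ D) ≤ dist x y := infDist_le_dist_of_mem ⟨hyC, hyD⟩
        linarith [hxy, h14]
      -- lam * (c + n) ≤ (δ'/ρ) * (c+n) ≤ ((δ+c)/ρ)*(2R) = tc*(δ+c)
      have hs1 : lam * (c + n) ≤ (δ' / ρ) * (c + n) :=
        mul_le_mul_of_nonneg_right hlamle (by linarith)
      have hs2 : (δ' / ρ) * (c + n) ≤ ((δ + c) / ρ) * (2 * R) := by
        apply mul_le_mul
        · gcongr
        · linarith
        · linarith
        · positivity
      have hs3 : ((δ + c) / ρ) * (2 * R) = tc * (δ + c) := by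
        rw [htcdef]; field_simp
      have hfin : infDist x (C ∩ D) ≤ (1 + tc) * c + tc * δ := by
        have h10 := hs2.trans_eq hs3
        have hexp : tc * (δ + c) = tc * δ + tc * c := by ring
        have hexp2 : (1 + tc) * c = c + tc * c := by ring
        linarith
      have ht1 : (1 + tc) * c ≤ (1 + tc) * (κ * a) :=
        mul_le_mul_of_nonneg_left hcκ (by linarith)
      have ht2 : (1 + tc) * (κ * a) ≤ A * a := by
        have h11 := mul_le_mul_of_nonneg_right hA1 ha0
        have hexp3 : (1 + tc) * κ * a = (1 + tc) * (κ * a) := by ring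
        linarith
      have ht3 : tc * δ ≤ A * δ := mul_le_mul_of_nonneg_right hA2 hδ0
      linarith
  · -- far from x₀ : coercivity
    have h1 : ε * n ≤ ‖B (x - x₀)‖ + infDist (x - x₀) D := hcoerc (x - x₀)
    have h2 : ‖B (x - x₀)‖ = a := by rw [map_sub, hBx₀, hadef]
    have h3 : infDist (x - x₀) D ≤ δ + ‖x₀‖ := by
      have := infDist_le_infDist_add_dist (x := x - x₀) (y := x) (s := D)
      have hd : dist (x - x₀) x = ‖x₀‖ := by
        rw [dist_eq_norm]
        have : x - x₀ - x = -x₀ := by abel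
        rw [this, norm_neg]
      rw [hd] at this
      linarith
    have h4 : 2 * ‖x₀‖ ≤ ε * n := by
      have : ε * R ≤ ε * n := mul_le_mul_of_nonneg_left hcase.le hε.le
      have hεR : ε * R = 2 * ‖x₀‖ := by
        rw [hRdef]; field_simp
      linarith
    have h5 : ε * n ≤ 2 * (a + δ) := by linarith
    have h6 : infDist x (C ∩ D) ≤ n := by
      have h15 : infDist x (C ∩ D) ≤ dist x x₀ := infDist_le_dist_of_mem hx₀K
      rwa [dist_eq_norm] at h15
    have h7 : n ≤ sc * (a + δ) := by
      rw [hscdef]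
      rw [div_mul_eq_mul_div, le_div_iff₀ hε]
      have hc' : n * ε = ε * n := mul_comm n ε
      linarith
    have h8 : sc * (a + δ) ≤ A * (a + δ) := mul_le_mul_of_nonneg_right hA4 (by linarith)
    have hexp4 : A * (a + δ) = A * a + A * δ := by ring
    linarith
end

section
/- Consider the conic program minimize ⟨c,x⟩ subject to Ax = b, x ∈ K, with optimal solution set X⋆ and a dual optimal pair (x⋆, y⋆) satisfying strong duality, slack s⋆ = c − A*y⋆, complementary face F = {x ∈ K : ⟨x, s⋆⟩ = 0} and complementary space V = aff(F). If x⋆ ∈ relint(F) (dual strict complementarity) and X⋆ is compact, then there exist constants γ, γ' ≥ 0 such that for all x ∈ V, dist(x, X⋆) ≤ γ‖Ax − b‖ + γ'·dist(x, F). -/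
open scoped RealInnerProductSpace
open Metric Bornology

set_option maxHeartbeats 1000000 in
set_option synthInstance.maxHeartbeats 1000000 in
private lemma rightinv_aux {E F : Type*} [NormedAddCommGroup E] [InnerProductSpace ℝ E]
    [FiniteDimensional ℝ E] [NormedAddCommGroup F] [InnerProductSpace ℝ F]
    [FiniteDimensional ℝ F] (V : Submodule ℝ E) (A : E →L[ℝ] F) :
    ∃ Cσ : ℝ, 0 ≤ Cσ ∧ ∀ w ∈ V.map (A : E →ₗ[ℝ] F), ∃ v ∈ V, A v = w ∧ ‖v‖ ≤ Cσ * ‖w‖ := by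
  set T : V →ₗ[ℝ] V.map (A : E →ₗ[ℝ] F) := (A : E →ₗ[ℝ] F).submoduleMap V with hT
  obtain ⟨σ, hσ⟩ := T.exists_rightInverse_of_surjective
    (LinearMap.range_eq_top.2 (LinearMap.submoduleMap_surjective _ _))
  set σc := LinearMap.toContinuousLinearMap σ with hσc
  refine ⟨‖σc‖, σc.opNorm_nonneg, ?_⟩
  intro w hw
  refine ⟨(σ ⟨w, hw⟩ : E), (σ ⟨w, hw⟩).2, ?_, ?_⟩
  · have h1 : T (σ ⟨w, hw⟩) = ⟨w, hw⟩ := by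
      rw [← LinearMap.comp_apply, hσ]; rfl
    have := congrArg Subtype.val h1
    simpa [hT] using this
  · have h1 : ‖σc ⟨w, hw⟩‖ ≤ ‖σc‖ * ‖(⟨w, hw⟩ : V.map (A : E →ₗ[ℝ] F))‖ := σc.le_opNorm _
    have h2 : ‖(⟨w, hw⟩ : V.map (A : E →ₗ[ℝ] F))‖ = ‖w‖ := rfl
    have h3 : ‖σc ⟨w, hw⟩‖ = ‖(σ ⟨w, hw⟩ : E)‖ := rfl
    rw [h2, h3] at h1; exact h1

private lemma robinson_aux {E F : Type*} [NormedAddCommGroup E] [InnerProductSpace ℝ E]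
    [FiniteDimensional ℝ E] [NormedAddCommGroup F] [InnerProductSpace ℝ F]
    [FiniteDimensional ℝ F]
    (V : Submodule ℝ E) (C : Set E) (hCV : C ⊆ (V : Set E)) (hCclosed : IsClosed C)
    (hCconv : Convex ℝ C)
    (A : E →L[ℝ] F) (b : F) (xs : E) (hxsC : xs ∈ C) (hAxs : A xs = b)
    (r : ℝ) (hr : 0 < r) (hball : ∀ z ∈ V, dist z xs ≤ r → z ∈ C)
    (X : Set E) (hXeq : X = {x | x ∈ C ∧ A x = b})
    (M : ℝ) (hM : 0 ≤ M) :
    ∃ Γ : ℝ, 0 ≤ Γ ∧ ∀ x ∈ V, ‖x - xs‖ ≤ M →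
      Metric.infDist x X ≤ Γ * ‖A x - b‖ + Γ * Metric.infDist x C := by
  have hxsV : xs ∈ V := hCV hxsC
  have hCne : C.Nonempty := ⟨xs, hxsC⟩
  obtain ⟨Cσ, hCσ0, hσb⟩ := rightinv_aux V A
  obtain ⟨B, hB0, hBdef⟩ : ∃ B : ℝ, 0 ≤ B ∧ B = M + Cσ * (‖A‖ * M) :=
    ⟨_, by positivity, rfl⟩
  obtain ⟨Γ, hΓ0, hΓ1, hΓ2⟩ : ∃ Γ : ℝ, 0 ≤ Γ ∧ Cσ + Cσ * B / r ≤ Γ ∧ B / r ≤ Γ := by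
    have d1 : 0 ≤ Cσ * B / r := by positivity
    have d2 : 0 ≤ B / r := by positivity
    exact ⟨Cσ + Cσ * B / r + B / r, by linarith, by linarith, by linarith⟩
  refine ⟨Γ, hΓ0, ?_⟩
  intro x hxV hxM
  obtain ⟨e, he, he0⟩ : ∃ e : ℝ, e = ‖A x - b‖ ∧ 0 ≤ e := ⟨_, rfl, norm_nonneg _⟩
  obtain ⟨h, hh, hh0⟩ : ∃ h : ℝ, h = Metric.infDist x C ∧ 0 ≤ h :=
    ⟨_, rfl, Metric.infDist_nonneg⟩
  have hAxb : A x - b = A (x - xs) := by simp [map_sub, hAxs]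
  have heA : e ≤ ‖A‖ * M := by
    rw [he, hAxb]
    exact le_trans (A.le_opNorm _) (mul_le_mul_of_nonneg_left hxM A.opNorm_nonneg)
  have hw : A x - b ∈ V.map (A : E →ₗ[ℝ] F) := by
    rw [hAxb]; exact Submodule.mem_map_of_mem (V.sub_mem hxV hxsV)
  obtain ⟨z, hzV, hAz, hznorm'⟩ := hσb _ hw
  have hznorm : ‖z‖ ≤ Cσ * e := by rw [he]; exact hznorm'
  obtain ⟨x', hx'⟩ : ∃ v : E, v = x - z := ⟨_, rfl⟩
  have hx'V : x' ∈ V := hx' ▸ V.sub_mem hxV hzV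
  have hAx' : A x' = b := by rw [hx', map_sub, hAz]; abel
  have hdxx' : dist x x' ≤ Cσ * e := by
    rw [dist_eq_norm, hx']; simpa using hznorm
  obtain ⟨δ, hδdef, hδ0⟩ : ∃ δ : ℝ, δ = Metric.infDist x' C ∧ 0 ≤ δ :=
    ⟨_, rfl, Metric.infDist_nonneg⟩
  have hδle : δ ≤ h + Cσ * e := by
    rw [hδdef, hh]
    calc Metric.infDist x' C ≤ Metric.infDist x C + dist x' x :=
      Metric.infDist_le_infDist_add_dist
    _ ≤ Metric.infDist x C + Cσ * e := by rw [dist_comm]; exact add_le_add le_rfl hdxx'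
  have hx'xs : ‖x' - xs‖ ≤ B := by
    calc ‖x' - xs‖ = ‖(x - xs) - z‖ := by rw [hx', sub_right_comm]
    _ ≤ ‖x - xs‖ + ‖z‖ := norm_sub_le _ _
    _ ≤ M + Cσ * e := add_le_add hxM hznorm
    _ ≤ B := by rw [hBdef]; nlinarith
  have key : Metric.infDist x X ≤ Cσ * e + (δ / r) * B := by
    by_cases hδz : δ = 0
    · have hx'C : x' ∈ C := by
        rw [hCclosed.mem_iff_infDist_zero hCne, ← hδdef]; exact hδz
      have hx'X : x' ∈ X := by rw [hXeq]; exact ⟨hx'C, hAx'⟩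
      have h1 : Metric.infDist x X ≤ dist x x' := Metric.infDist_le_dist_of_mem hx'X
      have h2 : 0 ≤ (δ / r) * B := by positivity
      linarith [le_trans h1 hdxx']
    · have hδpos : 0 < δ := lt_of_le_of_ne hδ0 (Ne.symm hδz)
      obtain ⟨u, huC, hu⟩ := hCclosed.exists_infDist_eq_dist hCne x'
      have hdist_u : dist x' u = δ := by rw [hδdef]; exact hu.symm
      obtain ⟨lam, hlam⟩ : ∃ lam : ℝ, lam = δ / (δ + r) := ⟨_, rfl⟩
      have hδr : 0 < δ + r := by linarith
      have hlam0 : 0 ≤ lam := by rw [hlam]; positivity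
      have hlam1 : lam ≤ 1 := by rw [hlam, div_le_one hδr]; linarith
      obtain ⟨q, hq⟩ : ∃ q : E, q = xs + (r / δ) • (x' - u) := ⟨_, rfl⟩
      have hqV : q ∈ V := hq ▸ V.add_mem hxsV (V.smul_mem _ (V.sub_mem hx'V (hCV huC)))
      have hqC : q ∈ C := by
        apply hball q hqV
        have hd : dist q xs = (r / δ) * δ := by
          rw [dist_eq_norm, hq, add_sub_cancel_left, norm_smul, Real.norm_eq_abs,
            abs_of_nonneg (by positivity : (0:ℝ) ≤ r / δ), ← dist_eq_norm, hdist_u]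
        rw [hd, div_mul_cancel₀ _ (ne_of_gt hδpos)]
      obtain ⟨x'', hx''⟩ : ∃ v : E, v = lam • q + (1 - lam) • u := ⟨_, rfl⟩
      have hx''C : x'' ∈ C := hx'' ▸ hCconv hqC huC hlam0 (by linarith) (by ring)
      have hkey : lam * (r / δ) = 1 - lam := by
        rw [hlam]; field_simp; ring
      have hx''eq : x'' = lam • xs + (1 - lam) • x' := by
        rw [hx'', hq, smul_add, smul_smul, hkey, smul_sub]
        abel
      have hAx'' : A x'' = b := by
        rw [hx''eq, map_add, map_smul, map_smul, hAxs, hAx', ← add_smul]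
        simp
      have hx''X : x'' ∈ X := by rw [hXeq]; exact ⟨hx''C, hAx''⟩
      have hdistx'x'' : dist x' x'' ≤ lam * B := by
        rw [dist_eq_norm, hx''eq]
        have h5 : x' - (lam • xs + (1 - lam) • x') = lam • (x' - xs) := by
          rw [smul_sub, sub_smul, one_smul]; abel
        rw [h5, norm_smul, Real.norm_eq_abs, abs_of_nonneg hlam0]
        exact mul_le_mul_of_nonneg_left hx'xs hlam0
      have hlamle : lam ≤ δ / r := by
        rw [hlam, div_le_div_iff₀ hδr hr]; nlinarith
      calc Metric.infDist x X ≤ dist x x'' := Metric.infDist_le_dist_of_mem hx''X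
      _ ≤ dist x x' + dist x' x'' := dist_triangle _ _ _
      _ ≤ Cσ * e + lam * B := add_le_add hdxx' hdistx'x''
      _ ≤ Cσ * e + (δ / r) * B := add_le_add le_rfl (mul_le_mul_of_nonneg_right hlamle hB0)
  have final : Cσ * e + (δ / r) * B ≤ Γ * e + Γ * h := by
    have h1 : (δ / r) * B ≤ ((h + Cσ * e) / r) * B := by gcongr
    have h2 : Cσ * e + ((h + Cσ * e) / r) * B = (Cσ + Cσ * B / r) * e + (B / r) * h := by
      field_simp; ring
    have h3 : (Cσ + Cσ * B / r) * e + (B / r) * h ≤ Γ * e + Γ * h :=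
      add_le_add (mul_le_mul_of_nonneg_right hΓ1 he0) (mul_le_mul_of_nonneg_right hΓ2 hh0)
    linarith
  calc Metric.infDist x X ≤ Cσ * e + (δ / r) * B := key
  _ ≤ Γ * e + Γ * h := final
  _ = Γ * ‖A x - b‖ + Γ * Metric.infDist x C := by rw [he, hh]


private lemma far_aux {E F : Type*} [NormedAddCommGroup E] [InnerProductSpace ℝ E]
    [FiniteDimensional ℝ E] [NormedAddCommGroup F] [InnerProductSpace ℝ F]
    [FiniteDimensional ℝ F]
    (V : Submodule ℝ E) (C : Set E) (hCV : C ⊆ (V : Set E)) (hCclosed : IsClosed C)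
    (hCconv : Convex ℝ C)
    (A : E →L[ℝ] F) (b : F)
    (X : Set E) (hXeq : X = {x | x ∈ C ∧ A x = b}) (hXcpt : IsCompact X)
    (hXne : X.Nonempty) :
    ∃ Γ : ℝ, 0 ≤ Γ ∧ ∀ x ∈ V, 1 ≤ Metric.infDist x X →
      Metric.infDist x X ≤ Γ * ‖A x - b‖ + Γ * Metric.infDist x C := by
  have hCne : C.Nonempty := by
    obtain ⟨p, hp⟩ := hXne; exact ⟨p, ((hXeq ▸ hp : p ∈ {x | x ∈ C ∧ A x = b})).1⟩
  have hXC : X ⊆ C := fun p hp => ((hXeq ▸ hp : p ∈ {x | x ∈ C ∧ A x = b})).1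
  obtain ⟨D, hD0, hDdef⟩ : ∃ D : ℝ, 0 ≤ D ∧ D = Metric.diam X := ⟨_, Metric.diam_nonneg, rfl⟩
  -- the "sphere" of points at distance one from X inside V
  obtain ⟨S, hSdef⟩ : ∃ S : Set E, S = {y | y ∈ (V : Set E) ∧ Metric.infDist y X = 1} :=
    ⟨_, rfl⟩
  have hScl : IsClosed S := by
    rw [hSdef]
    exact (Submodule.closed_of_finiteDimensional V).inter
      (isClosed_eq (continuous_infDist_pt X) continuous_const)
  have hSbdd : IsBounded S := by
    obtain ⟨R, hR⟩ := hXcpt.isBounded.subset_closedBall 0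
    apply (isBounded_closedBall (x := (0:E)) (r := R + 1)).subset
    intro y hy
    rw [hSdef] at hy
    obtain ⟨p, hpX, hpd⟩ := hXcpt.exists_infDist_eq_dist hXne y
    have h1 : dist y p = 1 := by rw [← hpd, hy.2]
    have h2 : dist p 0 ≤ R := hR hpX
    simp only [mem_closedBall]
    calc dist y 0 ≤ dist y p + dist p 0 := dist_triangle _ _ _
    _ ≤ R + 1 := by linarith
  have hScpt : IsCompact S := Metric.isCompact_of_isClosed_isBounded hScl hSbdd
  -- key construction: from any far point produce a point of S on the segment
  have claim : ∀ x ∈ V, 1 ≤ Metric.infDist x X → ∃ t : ℝ, 0 < t ∧ t ≤ 1 ∧ ∃ y ∈ S,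
      ‖A y - b‖ + Metric.infDist y C ≤ t * (‖A x - b‖ + Metric.infDist x C) ∧
      t * Metric.infDist x X ≤ 1 + D := by
    intro x hxV hxd
    obtain ⟨xh, hxhX, hxhd⟩ := hXcpt.exists_infDist_eq_dist hXne x
    have hxhC : xh ∈ C := hXC hxhX
    have hAxh : A xh = b := ((hXeq ▸ hxhX : xh ∈ {x | x ∈ C ∧ A x = b})).2
    have hφcont : Continuous fun t : ℝ => Metric.infDist (xh + t • (x - xh)) X :=
      (continuous_infDist_pt X).comp (by continuity)
    have hφ0 : Metric.infDist (xh + (0:ℝ) • (x - xh)) X = 0 := by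
      simp [Metric.infDist_zero_of_mem hxhX]
    have hφ1 : Metric.infDist (xh + (1:ℝ) • (x - xh)) X = Metric.infDist x X := by
      norm_num
    have hIVT := intermediate_value_Icc (le_of_lt one_pos : (0:ℝ) ≤ 1)
      hφcont.continuousOn
    rw [hφ0, hφ1] at hIVT
    obtain ⟨t, ht01, htval⟩ := hIVT ⟨le_of_lt one_pos, hxd⟩
    obtain ⟨y, hy⟩ : ∃ y : E, y = xh + t • (x - xh) := ⟨_, rfl⟩
    have htval' : Metric.infDist y X = 1 := by rw [hy]; simpa using htval
    have hyV : y ∈ V := hy ▸ V.add_mem (hCV hxhC) (V.smul_mem _ (V.sub_mem hxV (hCV hxhC)))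
    have hyS : y ∈ S := by rw [hSdef]; exact ⟨hyV, htval'⟩
    have ht0 : 0 < t := by
      rcases lt_or_eq_of_le ht01.1 with h | h
      · exact h
      · exfalso
        have : y = xh := by rw [hy, ← h]; simp
        rw [hy, ← h] at htval'
        simp only [zero_smul, add_zero] at htval'
        rw [Metric.infDist_zero_of_mem hxhX] at htval'
        norm_num at htval'
    refine ⟨t, ht0, ht01.2, y, hyS, ?_, ?_⟩
    · -- f y ≤ t * f x
      have hg : ‖A y - b‖ = t * ‖A x - b‖ := by
        have : A y - b = t • (A x - b) := by
          rw [hy]; simp [map_add, map_smul, hAxh, smul_sub]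
        rw [this, norm_smul, Real.norm_eq_abs, abs_of_pos ht0]
      have hdistC : Metric.infDist y C ≤ t * Metric.infDist x C := by
        obtain ⟨p, hpC, hpd⟩ := hCclosed.exists_infDist_eq_dist hCne x
        have hm : xh + t • (p - xh) ∈ C := by
          have := hCconv hxhC hpC (by have := ht01.2; linarith : (0:ℝ) ≤ 1 - t) (le_of_lt ht0) (by ring)
          have heq : (1 - t) • xh + t • p = xh + t • (p - xh) := by
            rw [smul_sub, sub_smul, one_smul]; abel
          rwa [heq] at this
        have h8 : Metric.infDist y C ≤ dist y (xh + t • (p - xh)) :=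
          Metric.infDist_le_dist_of_mem hm
        have h9 : dist y (xh + t • (p - xh)) = t * dist x p := by
          rw [hy, dist_eq_norm]
          have h10 : xh + t • (x - xh) - (xh + t • (p - xh)) = t • (x - p) := by
            module
          rw [h10, norm_smul, Real.norm_eq_abs, abs_of_pos ht0, dist_eq_norm]
        rw [hpd]
        linarith
      have h6 : ‖A y - b‖ + Metric.infDist y C ≤ t * ‖A x - b‖ + t * Metric.infDist x C := by
        rw [hg]; exact add_le_add le_rfl hdistC
      have h7 : t * ‖A x - b‖ + t * Metric.infDist x C
          = t * (‖A x - b‖ + Metric.infDist x C) := by ring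
      linarith
    · -- t * d ≤ 1 + D
      have h1 : t * Metric.infDist x X = dist y xh := by
        rw [hy, dist_eq_norm, add_sub_cancel_left, norm_smul, Real.norm_eq_abs,
          abs_of_pos ht0, hxhd, dist_eq_norm]
      obtain ⟨p, hpX, hpd⟩ := hXcpt.exists_infDist_eq_dist hXne y
      have h2 : dist y p = 1 := by rw [← hpd, htval']
      have h3 : dist p xh ≤ D := by
        rw [hDdef]; exact Metric.dist_le_diam_of_mem hXcpt.isBounded hpX hxhX
      have h4 : dist y xh ≤ dist y p + dist p xh := dist_triangle _ _ _
      linarith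
  by_cases hS : S.Nonempty
  · -- minimum of the residual over S is positive
    have hfc : ContinuousOn (fun y => ‖A y - b‖ + Metric.infDist y C) S :=
      (Continuous.add (by continuity) (continuous_infDist_pt C)).continuousOn
    obtain ⟨y₀, hy₀S, hy₀min⟩ := hScpt.exists_isMinOn hS hfc
    obtain ⟨μ, hμdef⟩ : ∃ μ : ℝ, μ = ‖A y₀ - b‖ + Metric.infDist y₀ C := ⟨_, rfl⟩
    have hμpos : 0 < μ := by
      rcases lt_or_eq_of_le (by rw [hμdef]; exact add_nonneg (norm_nonneg _) Metric.infDist_nonneg : (0:ℝ) ≤ μ) with h | h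
      · exact h
      · exfalso
        have h1 : ‖A y₀ - b‖ = 0 ∧ Metric.infDist y₀ C = 0 := by
          constructor <;> nlinarith [norm_nonneg (A y₀ - b), Metric.infDist_nonneg (s := C) (x := y₀), hμdef]
        have hy₀C : y₀ ∈ C := by
          rw [hCclosed.mem_iff_infDist_zero hCne]; exact h1.2
        have hy₀X : y₀ ∈ X := by
          rw [hXeq]
          exact ⟨hy₀C, by have := h1.1; rwa [norm_sub_eq_zero_iff] at this⟩
        have : Metric.infDist y₀ X = 0 := Metric.infDist_zero_of_mem hy₀X
        rw [hSdef] at hy₀S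
        rw [hy₀S.2] at this
        norm_num at this
    refine ⟨(1 + D) / μ, div_nonneg (by linarith) hμpos.le, ?_⟩
    intro x hxV hxd
    obtain ⟨t, ht0, ht1, y, hyS, hfy, htd⟩ := claim x hxV hxd
    have hμy : μ ≤ ‖A y - b‖ + Metric.infDist y C := by rw [hμdef]; exact hy₀min hyS
    have hfx0 : 0 ≤ ‖A x - b‖ + Metric.infDist x C := add_nonneg (norm_nonneg _) Metric.infDist_nonneg
    have hd0 : 0 < Metric.infDist x X := lt_of_lt_of_le one_pos hxd
    -- μ ≤ t * f x  and  t * d ≤ 1 + D  give  μ * d ≤ (1 + D) * f x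
    have key : μ * Metric.infDist x X ≤ (1 + D) * (‖A x - b‖ + Metric.infDist x C) := by
      have h1 : μ * Metric.infDist x X ≤ (t * (‖A x - b‖ + Metric.infDist x C)) *
          Metric.infDist x X :=
        mul_le_mul_of_nonneg_right (le_trans hμy hfy) hd0.le
      have h2 : (t * (‖A x - b‖ + Metric.infDist x C)) * Metric.infDist x X
          = (t * Metric.infDist x X) * (‖A x - b‖ + Metric.infDist x C) := by ring
      have h3 : (t * Metric.infDist x X) * (‖A x - b‖ + Metric.infDist x C)
          ≤ (1 + D) * (‖A x - b‖ + Metric.infDist x C) :=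
        mul_le_mul_of_nonneg_right htd hfx0
      linarith
    rw [div_mul_eq_mul_div, div_mul_eq_mul_div, ← add_div, le_div_iff₀ hμpos]
    nlinarith
  · refine ⟨0, le_rfl, ?_⟩
    intro x hxV hxd
    obtain ⟨t, _, _, y, hyS, _, _⟩ := claim x hxV hxd
    exact absurd ⟨y, hyS⟩ hS

theorem stmt3 {E F : Type*} [NormedAddCommGroup E] [InnerProductSpace ℝ E]
    [FiniteDimensional ℝ E] [NormedAddCommGroup F] [InnerProductSpace ℝ F]
    [FiniteDimensional ℝ F]
    (K : Set E) (hKclosed : IsClosed K) (hKconv : Convex ℝ K)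
    (hKcone : ∀ x ∈ K, ∀ t : ℝ, 0 ≤ t → t • x ∈ K)
    (hKpointed : K ∩ (-K) ⊆ {0}) (hKint : (interior K).Nonempty)
    (A : E →L[ℝ] F) (b : F) (c : E)
    (X : Set E)
    (hX : X = {x | x ∈ K ∧ A x = b ∧ ∀ z ∈ K, A z = b → ⟪c, x⟫ ≤ ⟪c, z⟫})
    (hXcpt : IsCompact X)
    (xs : E) (hxs : xs ∈ X) (ys : F)
    (ss : E) (hss : ss = c - ContinuousLinearMap.adjoint A ys)
    (hSD : ⟪ss, xs⟫ = 0)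
    (Fc : Set E) (hFc : Fc = {x ∈ K | ⟪x, ss⟫ = 0})
    (hDSC : xs ∈ intrinsicInterior ℝ Fc) :
    ∃ γ ≥ (0 : ℝ), ∃ γ' ≥ (0 : ℝ), ∀ x ∈ (affineSpan ℝ Fc : Set E),
      Metric.infDist x X ≤ γ * ‖A x - b‖ + γ' * Metric.infDist x Fc := by
  -- basic facts about xs
  have hxs' : xs ∈ {x | x ∈ K ∧ A x = b ∧ ∀ z ∈ K, A z = b → ⟪c, x⟫ ≤ ⟪c, z⟫} := by
    rw [← hX]; exact hxs
  obtain ⟨hxsK, hxsA, hxsopt⟩ := hxs'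
  have h0K : (0 : E) ∈ K := by simpa using hKcone xs hxsK 0 le_rfl
  have hxsFc : xs ∈ Fc := by rw [hFc]; exact ⟨hxsK, by rw [real_inner_comm]; exact hSD⟩
  have h0Fc : (0 : E) ∈ Fc := by rw [hFc]; exact ⟨h0K, inner_zero_left _⟩
  -- Fc is closed and convex
  have hFclosed : IsClosed Fc := by
    rw [hFc]
    have : {x : E | x ∈ K ∧ ⟪x, ss⟫ = 0} = K ∩ (fun x : E => ⟪x, ss⟫) ⁻¹' {0} := rfl
    rw [this]
    exact hKclosed.inter (isClosed_singleton.preimage (continuous_id.inner continuous_const))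
  have hFconv : Convex ℝ Fc := by
    rw [hFc]
    intro x hx y hy a bb ha hb hab
    refine ⟨hKconv hx.1 hy.1 ha hb hab, ?_⟩
    rw [inner_add_left, real_inner_smul_left, real_inner_smul_left, hx.2, hy.2]
    ring
  -- the inner product decomposition
  have hinner : ∀ z : E, ⟪c, z⟫ = ⟪ss, z⟫ + ⟪ys, A z⟫ := by
    intro z
    rw [hss, inner_sub_left, ContinuousLinearMap.adjoint_inner_left]
    ring
  have hcxs : ⟪c, xs⟫ = ⟪ys, b⟫ := by
    rw [hinner xs, hSD, hxsA, zero_add]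
  -- characterization of the solution set
  have hXeq : X = {x | x ∈ Fc ∧ A x = b} := by
    rw [hX]
    ext x
    simp only [Set.mem_setOf_eq]
    constructor
    · rintro ⟨hxK, hxA, hxopt⟩
      have h1 : ⟪c, x⟫ ≤ ⟪c, xs⟫ := hxopt xs hxsK hxsA
      have h2 : ⟪c, xs⟫ ≤ ⟪c, x⟫ := hxsopt x hxK hxA
      have h3 : ⟪c, x⟫ = ⟪ys, b⟫ := by linarith [hcxs]
      have h4 : ⟪ss, x⟫ = 0 := by
        have := hinner x
        rw [hxA] at this
        linarith
      exact ⟨by rw [hFc]; exact ⟨hxK, by rw [real_inner_comm]; exact h4⟩, hxA⟩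
    · rintro ⟨hxFc, hxA⟩
      rw [hFc] at hxFc
      refine ⟨hxFc.1, hxA, ?_⟩
      intro z hz hzA
      have h1 : ⟪c, x⟫ = ⟪ys, b⟫ := by
        rw [hinner x, hxA]
        have : ⟪ss, x⟫ = 0 := by rw [real_inner_comm]; exact hxFc.2
        rw [this, zero_add]
      rw [h1, ← hcxs]
      exact hxsopt z hz hzA
  have hXne : X.Nonempty := ⟨xs, hxs⟩
  have hXFc : X ⊆ Fc := fun p hp => ((hXeq ▸ hp : p ∈ {x | x ∈ Fc ∧ A x = b})).1
  -- the complementary space as a submodule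
  have h0span : (0 : E) ∈ affineSpan ℝ Fc := subset_affineSpan ℝ Fc h0Fc
  obtain ⟨V, hVdef⟩ : ∃ V : Submodule ℝ E, V = (affineSpan ℝ Fc).direction := ⟨_, rfl⟩
  have hVeq : ∀ z : E, z ∈ (affineSpan ℝ Fc : Set E) ↔ z ∈ V := by
    intro z
    constructor
    · intro hz
      have := AffineSubspace.vsub_mem_direction hz h0span
      simpa [hVdef] using this
    · intro hz
      have hz' : z ∈ (affineSpan ℝ Fc).direction := by rw [← hVdef]; exact hz
      have := AffineSubspace.vadd_mem_of_mem_direction hz' h0span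
      simpa using this
  have hFV : Fc ⊆ (V : Set E) := fun z hz => (hVeq z).1 (subset_affineSpan ℝ Fc hz)
  -- extract a relative ball around xs from strict complementarity
  obtain ⟨r, hr, hball⟩ : ∃ r : ℝ, 0 < r ∧ ∀ z ∈ V, dist z xs ≤ r → z ∈ Fc := by
    obtain ⟨y, hy, hyx⟩ := hDSC
    rw [mem_interior_iff_mem_nhds, Metric.mem_nhds_iff] at hy
    obtain ⟨ε, hε, hεball⟩ := hy
    refine ⟨ε / 2, by linarith, ?_⟩
    intro z hzV hzd
    have hzspan : z ∈ affineSpan ℝ Fc := by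
      have := (hVeq z).2 hzV
      exact this
    have hdist : dist (⟨z, hzspan⟩ : affineSpan ℝ Fc) y < ε := by
      rw [Subtype.dist_eq, hyx]
      calc dist z xs ≤ ε / 2 := hzd
      _ < ε := by linarith
    exact hεball hdist
  -- diameter bound
  obtain ⟨D, hD0, hDdef⟩ : ∃ D : ℝ, 0 ≤ D ∧ D = Metric.diam X := ⟨_, Metric.diam_nonneg, rfl⟩
  obtain ⟨Γ₁, hΓ₁0, hΓ₁⟩ := robinson_aux V Fc hFV hFclosed hFconv A b xs hxsFc hxsA
    r hr hball X hXeq (1 + D) (by linarith)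
  obtain ⟨Γ₂, hΓ₂0, hΓ₂⟩ := far_aux V Fc hFV hFclosed hFconv A b X hXeq hXcpt hXne
  refine ⟨Γ₁ ⊔ Γ₂, le_max_of_le_left hΓ₁0, Γ₁ ⊔ Γ₂, le_max_of_le_left hΓ₁0, ?_⟩
  intro x hx
  have hxV : x ∈ V := (hVeq x).1 hx
  have hmono : ∀ Γ : ℝ, Γ ≤ Γ₁ ⊔ Γ₂ →
      Γ * ‖A x - b‖ + Γ * Metric.infDist x Fc ≤
      (Γ₁ ⊔ Γ₂) * ‖A x - b‖ + (Γ₁ ⊔ Γ₂) * Metric.infDist x Fc := by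
    intro Γ hΓ
    exact add_le_add (mul_le_mul_of_nonneg_right hΓ (norm_nonneg _))
      (mul_le_mul_of_nonneg_right hΓ Metric.infDist_nonneg)
  by_cases hd : Metric.infDist x X ≤ 1
  · have hxM : ‖x - xs‖ ≤ 1 + D := by
      obtain ⟨xh, hxhX, hxhd⟩ := hXcpt.exists_infDist_eq_dist hXne x
      have h1 : dist x xh ≤ 1 := by rw [← hxhd]; exact hd
      have h2 : dist xh xs ≤ D := by
        rw [hDdef]; exact Metric.dist_le_diam_of_mem hXcpt.isBounded hxhX hxs
      rw [← dist_eq_norm]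
      calc dist x xs ≤ dist x xh + dist xh xs := dist_triangle _ _ _
      _ ≤ 1 + D := add_le_add h1 h2
    exact le_trans (hΓ₁ x hxV hxM) (hmono Γ₁ (le_max_left _ _))
  · push_neg at hd
    exact le_trans (hΓ₂ x hxV hd.le) (hmono Γ₂ (le_max_right _ _))
end

section
/- Let V be a linear subspace of a Euclidean space E with orthogonal complement V⊥, let X⋆ ⊆ V be nonempty, and suppose for all v ∈ V we have dist(v, X⋆) ≤ γ‖Av − b‖ + γ'·dist(v, F) for a linear map A, vector b, and set F ⊆ V. Then for all x ∈ E, dist(x, X⋆) ≤ (1 + γσ_max(A))‖P_{V⊥}(x)‖ + γ‖Ax − b‖ + γ'·dist(P_V(x), F), where P_V and P_{V⊥} are orthogonal projections onto V and V⊥, and σ_max(A) is the largest singular value of A. -/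
/-! Write `x = v + w` with `v = P_V x ∈ V` and `w = P_{V⊥} x`. Moving from `x` to `v` costs
`‖w‖` in the distance to `X⋆` and at most `‖A‖ ‖w‖` in the residual `‖A · - b‖`, so the error
bound at `v` yields the one at `x`. -/

theorem ContinuousLinearMap.norm_apply_sub_le_opNorm_mul_dist_add {𝕜 E F : Type*}
    [NontriviallyNormedField 𝕜] [SeminormedAddCommGroup E] [NormedSpace 𝕜 E]
    [SeminormedAddCommGroup F] [NormedSpace 𝕜 F] (A : E →L[𝕜] F) (x y : E) (b : F) :
    ‖A y - b‖ ≤ ‖A‖ * dist y x + ‖A x - b‖ :=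
  calc ‖A y - b‖ ≤ ‖A y - A x‖ + ‖A x - b‖ := norm_sub_le_norm_sub_add_norm_sub _ _ _
    _ ≤ ‖A‖ * dist y x + ‖A x - b‖ := by
      rw [← map_sub, dist_eq_norm]
      gcongr
      exact A.le_opNorm _

theorem Metric.infDist_le_of_errorBound {E F : Type*} [SeminormedAddCommGroup E]
    [NormedSpace ℝ E] [SeminormedAddCommGroup F] [NormedSpace ℝ F]
    (A : E →L[ℝ] F) (b : F) (Xs Fset : Set E) {γ γ' : ℝ} (hγ : 0 ≤ γ) {x v : E}
    (hv : Metric.infDist v Xs ≤ γ * ‖A v - b‖ + γ' * Metric.infDist v Fset) :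
    Metric.infDist x Xs ≤
      (1 + γ * ‖A‖) * dist x v + γ * ‖A x - b‖ + γ' * Metric.infDist v Fset := by
  have hA := A.norm_apply_sub_le_opNorm_mul_dist_add x v b
  rw [dist_comm v x] at hA
  calc Metric.infDist x Xs ≤ Metric.infDist v Xs + dist x v :=
        Metric.infDist_le_infDist_add_dist
    _ ≤ γ * (‖A‖ * dist x v + ‖A x - b‖) + γ' * Metric.infDist v Fset + dist x v := by
        gcongr; exact hv.trans (by gcongr)
    _ = _ := by ring

theorem Submodule.dist_orthogonalProjectionOnto_eq_norm {E : Type*} [NormedAddCommGroup E]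
    [InnerProductSpace ℝ E] (V : Submodule ℝ E) [V.HasOrthogonalProjection] (x : E) :
    dist x (V.orthogonalProjectionOnto x) = ‖(Vᗮ.orthogonalProjectionOnto x : E)‖ := by
  rw [V.orthogonalProjectionOnto_orthogonal, dist_eq_norm]
  rfl

theorem stmt5_general {E F : Type*} [NormedAddCommGroup E] [InnerProductSpace ℝ E]
    [FiniteDimensional ℝ E] [NormedAddCommGroup F] [InnerProductSpace ℝ F]
    (V : Submodule ℝ E) (Xs : Set E)
    (A : E →L[ℝ] F) (b : F) (Fset : Set E)
    (γ γ' : ℝ) (hγ : 0 ≤ γ)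
    (h : ∀ v ∈ V, Metric.infDist v Xs ≤ γ * ‖A v - b‖ + γ' * Metric.infDist v Fset) :
    ∀ x : E, Metric.infDist x Xs ≤
      (1 + γ * ‖A‖) * ‖(Submodule.orthogonalProjectionOnto Vᗮ x : E)‖ + γ * ‖A x - b‖
        + γ' * Metric.infDist ((Submodule.orthogonalProjectionOnto V x : E)) Fset := by
  intro x
  rw [← V.dist_orthogonalProjectionOnto_eq_norm]
  exact Metric.infDist_le_of_errorBound A b Xs Fset hγ (h _ (V.orthogonalProjectionOnto x).2)

theorem stmt5 {E F : Type*} [NormedAddCommGroup E] [InnerProductSpace ℝ E]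
    [FiniteDimensional ℝ E] [NormedAddCommGroup F] [InnerProductSpace ℝ F]
    [FiniteDimensional ℝ F]
    (V : Submodule ℝ E) (Xs : Set E) (hXsne : Xs.Nonempty)
    (hXsV : Xs ⊆ (V : Set E))
    (A : E →L[ℝ] F) (b : F) (Fset : Set E) (hFV : Fset ⊆ (V : Set E))
    (γ γ' : ℝ) (hγ : 0 ≤ γ) (hγ' : 0 ≤ γ')
    (h : ∀ v ∈ V, Metric.infDist v Xs ≤ γ * ‖A v - b‖ + γ' * Metric.infDist v Fset) :
    ∀ x : E, Metric.infDist x Xs ≤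
      (1 + γ * ‖A‖) * ‖(Submodule.orthogonalProjectionOnto Vᗮ x : E)‖ + γ * ‖A x - b‖
        + γ' * Metric.infDist ((Submodule.orthogonalProjectionOnto V x : E)) Fset :=
  stmt5_general V Xs A b Fset γ γ' hγ h
end

section
/- Let Q ⊆ R^{n+1} be the second order cone, s = (s₁, s_{n+1}) ∈ ∂Q \ {0} with ‖s₁‖ = s_{n+1}, and let V = span{(−s₁, s_{n+1})}. Then for any x = (x₁, x_{n+1}) ∈ Q, writing ε̄ = ⟨x, s⟩ / ‖s‖, the squared norm of the projection of x onto V⊥ satisfies ‖P_{V⊥}(x)‖² ≤ −ε̄² + 2√2 · x_{n+1} · ε̄, and in particular ‖P_{V⊥}(x)‖² ≤ 2√2 ‖x‖ ⟨x, s⟩ / ‖s‖. -/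
open scoped RealInnerProductSpace

theorem stmt10 {n : ℕ} (s1 : EuclideanSpace ℝ (Fin n)) (st : ℝ)
    (hbd : ‖s1‖ = st) (hpos : 0 < st)
    (x1 : EuclideanSpace ℝ (Fin n)) (xt : ℝ) (hx : ‖x1‖ ≤ xt)
    (snorm εbar pperp2 : ℝ)
    (hsnorm : snorm = Real.sqrt (‖s1‖ ^ 2 + st ^ 2))
    (hε : εbar = (⟪x1, s1⟫ + xt * st) / snorm)
    (hp : pperp2 = (‖x1‖ ^ 2 + xt ^ 2) - ((⟪x1, -s1⟫ + xt * st) / snorm) ^ 2) :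
    pperp2 ≤ -εbar ^ 2 + 2 * Real.sqrt 2 * xt * εbar ∧
      pperp2 ≤ 2 * Real.sqrt 2 * Real.sqrt (‖x1‖ ^ 2 + xt ^ 2)
        * (⟪x1, s1⟫ + xt * st) / snorm := by
  have hx0 : (0:ℝ) ≤ ‖x1‖ := norm_nonneg _
  have hxt : 0 ≤ xt := le_trans hx0 hx
  have h2 : Real.sqrt 2 ^ 2 = 2 := Real.sq_sqrt (by norm_num)
  have h2pos : (0:ℝ) < Real.sqrt 2 := by positivity
  have hsn : snorm = st * Real.sqrt 2 := by
    rw [hsnorm, hbd, show st ^ 2 + st ^ 2 = st ^ 2 * 2 by ring,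
      Real.sqrt_mul (sq_nonneg st), Real.sqrt_sq hpos.le]
  have hsnpos : 0 < snorm := by rw [hsn]; positivity
  have ha : -(‖x1‖ * st) ≤ ⟪x1, s1⟫ := by
    have h := abs_real_inner_le_norm x1 s1
    rw [hbd] at h
    linarith [(abs_le.mp h).1]
  have haxt : 0 ≤ ⟪x1, s1⟫ + xt * st := by nlinarith
  have hεnn : 0 ≤ εbar := by rw [hε]; positivity
  have hip : ⟪x1, -s1⟫ = -⟪x1, s1⟫ := by rw [inner_neg_right]
  have hst : st ≠ 0 := hpos.ne'
  have hr : Real.sqrt 2 ≠ 0 := h2pos.ne'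
  have hu2 : ‖x1‖ ^ 2 ≤ xt ^ 2 := by nlinarith
  have hterm : 2 * Real.sqrt 2 * xt * εbar = 2 * xt * (⟪x1, s1⟫ + xt * st) / st := by
    rw [hε, hsn]; field_simp
  have hsq : ∀ c : ℝ, (c / snorm) ^ 2 = c ^ 2 / (2 * st ^ 2) := by
    intro c; rw [hsn, div_pow, mul_pow, h2]; ring
  have key : pperp2 = -εbar ^ 2 + 2 * Real.sqrt 2 * xt * εbar + (‖x1‖ ^ 2 - xt ^ 2) := by
    rw [hp, hip, hterm, hε, hsq, hsq]
    field_simp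
    ring
  constructor
  · linarith
  · have h1 : pperp2 ≤ 2 * Real.sqrt 2 * xt * εbar := by nlinarith [sq_nonneg εbar]
    have h2' : xt ≤ Real.sqrt (‖x1‖ ^ 2 + xt ^ 2) := by
      exact (Real.le_sqrt hxt (by positivity)).mpr (by nlinarith)
    have h3 : 2 * Real.sqrt 2 * xt * εbar ≤
        2 * Real.sqrt 2 * Real.sqrt (‖x1‖ ^ 2 + xt ^ 2) * εbar := by
      have : 0 ≤ 2 * Real.sqrt 2 * εbar := by positivity
      nlinarith
    calc pperp2 ≤ 2 * Real.sqrt 2 * Real.sqrt (‖x1‖ ^ 2 + xt ^ 2) * εbar := by linarith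
      _ = 2 * Real.sqrt 2 * Real.sqrt (‖x1‖ ^ 2 + xt ^ 2) * (⟪x1, s1⟫ + xt * st) / snorm := by
          rw [hε]; ring
end

section
/- Let X, S ∈ Sⁿ be positive semidefinite matrices, let r ≥ 0, let V ∈ R^{n×r} have columns equal to orthonormal eigenvectors of S corresponding to its r smallest eigenvalues, and let V = range(V). Set ε = tr(XS) and T = λ_{n−r}(S) (the (n−r)-th largest eigenvalue of S). If T > 0, then ‖P_{V⊥}(X)‖_F ≤ ε/T + √(2(ε/T)‖X‖_op), where P_{V⊥} is the orthogonal projection (in the trace inner product) onto the orthogonal complement of {V R Vᵀ : R ∈ Sʳ}. -/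
open Matrix

/-- Frobenius norm of a real square matrix. -/
noncomputable def frobNorm {n : ℕ} (M : Matrix (Fin n) (Fin n) ℝ) : ℝ :=
  Real.sqrt (∑ i, ∑ j, (M i j) ^ 2)

/-- Operator (spectral) norm of a real square matrix. -/
noncomputable def opNorm {n : ℕ} (M : Matrix (Fin n) (Fin n) ℝ) : ℝ :=
  sSup {r : ℝ | ∃ x : Fin n → ℝ, ∑ i, (x i) ^ 2 = 1 ∧
    r = Real.sqrt (∑ i, ((M *ᵥ x) i) ^ 2)}

/-! With `P = V Vᵀ` and `Q = 1 - P`: since `S` commutes with `P` and is at least `T` on the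
range of `Q`, we get `T • Q ≤ S` in the Loewner order, hence `tr (X Q) ≤ ε / T`. Expanding,
`‖X - P X P‖²_F = 2 tr (X P X Q) + tr (X Q X Q)`. The first term is at most `‖X‖ tr (X Q)`
because `X P X ≤ X² ≤ ‖X‖ • X`, and the second is `tr ((Q X Q)²) ≤ tr (Q X Q)² = tr (X Q)²`
because `Q X Q ≥ 0`. So `‖X - P X P‖²_F ≤ δ² + 2 ‖X‖ δ` with `δ = ε / T`. -/

theorem le_of_le_conjugate_of_commute {R : Type*} [Ring R] [StarRing R] [PartialOrder R]
    [StarOrderedRing R] {s q a : R} (hq : IsStarProjection q) (hsq : Commute s q) (hs : 0 ≤ s)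
    (ha : a ≤ q * s * q) : a ≤ s := by
  have hqsq : q * s * q = s * q := by rw [← hsq.eq, mul_assoc, hq.isIdempotentElem.eq]
  have hsplit : q * s * q + star (1 - q) * s * (1 - q) = s := by
    rw [hq.one_sub.isSelfAdjoint.star_eq, sub_mul, one_mul, mul_sub, mul_one, sub_mul, hqsq,
      ← hsq.eq]
    abel
  calc a ≤ q * s * q := ha
    _ ≤ q * s * q + star (1 - q) * s * (1 - q) :=
      le_add_of_nonneg_right (star_left_conjugate_nonneg hs _)
    _ = s := hsplit

theorem Real.sqrt_le_add_sqrt_of_le {x a c δ : ℝ} (hx : x ≤ a ^ 2 + 2 * c * a) (ha : 0 ≤ a)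
    (haδ : a ≤ δ) (hc : 0 ≤ c) : √x ≤ δ + √(2 * δ * c) := by
  have hδ : 0 ≤ δ := ha.trans haδ
  have hδc : 0 ≤ 2 * δ * c := by positivity
  refine Real.sqrt_le_iff.2 ⟨by positivity, ?_⟩
  nlinarith [Real.sq_sqrt hδc, Real.sqrt_nonneg (2 * δ * c)]

namespace Matrix

open scoped MatrixOrder

variable {m : Type*} [Fintype m] {r : Type*} [Fintype r] [DecidableEq r]

theorem trace_mul_self_sub_mul_mul {α : Type*} [CommRing α] [DecidableEq m]
    {X P : Matrix m m α} (hP : IsIdempotentElem P) :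
    ((X - P * X * P) * (X - P * X * P)).trace =
      2 * (X * P * X * (1 - P)).trace + (X * (1 - P) * X * (1 - P)).trace := by
  have hPP : ∀ Y : Matrix m m α, P * (P * Y) = P * Y := fun Y => by
    rw [← Matrix.mul_assoc, hP.eq]
  have hcompress : ((X - P * X * P) * (X - P * X * P)).trace =
      (X * X).trace - (X * P * X * P).trace := by
    have e1 : (X * (P * X * P)).trace = (X * P * X * P).trace := by simp only [Matrix.mul_assoc]
    have e2 : (P * X * P * X).trace = (X * P * X * P).trace := by
      rw [trace_mul_comm]; simp only [Matrix.mul_assoc]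
    have e3 : (P * X * P * (P * X * P)).trace = (X * P * X * P).trace := by
      simp only [Matrix.mul_assoc, hPP]
      rw [trace_mul_comm]
      simp only [Matrix.mul_assoc, hP.eq]
    rw [show (X - P * X * P) * (X - P * X * P) =
        X * X - X * (P * X * P) - P * X * P * X + P * X * P * (P * X * P) by noncomm_ring,
      trace_add, trace_sub, trace_sub, e1, e2, e3]
    ring
  have hsplit : (X * X).trace = (X * P * X * P).trace + 2 * (X * P * X * (1 - P)).trace +
      (X * (1 - P) * X * (1 - P)).trace := by
    have e : (X * (1 - P) * X * P).trace = (X * P * X * (1 - P)).trace := by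
      rw [Matrix.mul_assoc, trace_mul_comm]; simp only [Matrix.mul_assoc]
    rw [show X * X = X * P * X * P + X * P * X * (1 - P) + X * (1 - P) * X * P +
        X * (1 - P) * X * (1 - P) by noncomm_ring, trace_add, trace_add, trace_add, e]
    ring
  rw [hcompress, hsplit]
  ring

theorem isStarProjection_mul_transpose {V : Matrix m r ℝ} (hV : Vᵀ * V = 1) :
    IsStarProjection (V * Vᵀ) where
  isIdempotentElem := by
    rw [IsIdempotentElem, Matrix.mul_assoc, ← Matrix.mul_assoc Vᵀ, hV, Matrix.one_mul]
  isSelfAdjoint := by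
    rw [IsSelfAdjoint, star_eq_conjTranspose, conjTranspose_eq_transpose_of_trivial,
      transpose_mul, transpose_transpose]

theorem commute_mul_transpose_of_mul_eq_mul_diagonal {S : Matrix m m ℝ} (hS : S.IsHermitian)
    {V : Matrix m r ℝ} {μ : r → ℝ} (hSV : S * V = V * diagonal μ) :
    Commute S (V * Vᵀ) := by
  have hSt : Sᵀ = S := by rw [← conjTranspose_eq_transpose_of_trivial]; exact hS
  have hSP : S * (V * Vᵀ) = V * diagonal μ * Vᵀ := by rw [← Matrix.mul_assoc, hSV]
  calc S * (V * Vᵀ) = (V * diagonal μ * Vᵀ)ᵀ := by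
        rw [hSP, transpose_mul, transpose_mul, transpose_transpose, diagonal_transpose,
          Matrix.mul_assoc]
    _ = V * Vᵀ * S := by rw [← hSP, transpose_mul, hSt, transpose_mul, transpose_transpose]

variable [DecidableEq m]

theorem trace_mul_nonneg_of_nonneg {A B : Matrix m m ℝ} (hA : 0 ≤ A) (hB : 0 ≤ B) :
    0 ≤ (A * B).trace := by
  have hcycle : (A * B).trace = (CFC.sqrt A * B * CFC.sqrt A).trace := by
    conv_rhs => rw [trace_mul_comm, ← mul_assoc, CFC.sqrt_mul_sqrt_self A hA]
  rw [hcycle]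
  exact (conjugate_nonneg_of_nonneg hB (CFC.sqrt_nonneg A)).posSemidef.trace_nonneg

theorem trace_mul_le_trace_mul_of_le {A B C : Matrix m m ℝ} (hAB : A ≤ B) (hC : 0 ≤ C) :
    (A * C).trace ≤ (B * C).trace := by
  have := trace_mul_nonneg_of_nonneg (sub_nonneg.2 hAB) hC
  rwa [sub_mul, trace_sub, sub_nonneg] at this

theorem mul_self_le_smul_of_le_smul_one {X : Matrix m m ℝ} {c : ℝ} (hX : 0 ≤ X)
    (hXc : X ≤ c • 1) : X * X ≤ c • X := by
  obtain ⟨R, hR, rfl⟩ : ∃ R, 0 ≤ R ∧ R * R = X :=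
    ⟨_, CFC.sqrt_nonneg X, CFC.sqrt_mul_sqrt_self X hX⟩
  calc R * R * (R * R) = R * (R * R) * R := by simp only [mul_assoc]
    _ ≤ R * (c • 1) * R := conjugate_le_conjugate_of_nonneg hXc hR
    _ = c • (R * R) := by rw [mul_smul_comm, mul_one, smul_mul_assoc]

theorem PosSemidef.sq_apply_le {M : Matrix m m ℝ} (hM : M.PosSemidef) (i j : m) :
    M i j ^ 2 ≤ M i i * M j j := by
  obtain ⟨R, hR, rfl⟩ : ∃ R, 0 ≤ R ∧ R * R = M :=
    ⟨_, CFC.sqrt_nonneg M, CFC.sqrt_mul_sqrt_self M hM.nonneg⟩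
  have hRR : ∀ a b, (R * R) a b = ∑ k, R k a * R k b := fun a b =>
    Finset.sum_congr rfl fun k _ => by
      dsimp only; rw [← hR.posSemidef.isHermitian.apply a k, star_trivial]
  simpa only [hRR, sq] using Finset.sum_mul_sq_le_sq_mul_sq Finset.univ (R · i) (R · j)

theorem PosSemidef.trace_mul_self_le_sq_trace {M : Matrix m m ℝ} (hM : M.PosSemidef) :
    (M * M).trace ≤ M.trace ^ 2 :=
  calc (M * M).trace = ∑ i, ∑ j, M i j ^ 2 := by
        refine Finset.sum_congr rfl fun i _ => Finset.sum_congr rfl fun j _ => ?_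
        dsimp only; rw [← hM.isHermitian.apply i j, star_trivial, sq]
    _ ≤ ∑ i, ∑ j, M i i * M j j := by gcongr with i _ j _; exact hM.sq_apply_le i j
    _ = M.trace ^ 2 := by rw [sq, trace, Finset.sum_mul_sum]; rfl

theorem trace_mul_mul_mul_le_sq_trace {X Q : Matrix m m ℝ} (hX : 0 ≤ X)
    (hQ : IsStarProjection Q) :
    (X * Q * X * Q).trace ≤ (X * Q).trace ^ 2 := by
  have hQQ : ∀ Y : Matrix m m ℝ, Q * (Q * Y) = Q * Y := fun Y => by
    rw [← Matrix.mul_assoc, hQ.isIdempotentElem.eq]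
  have hsq : (Q * X * Q * (Q * X * Q)).trace = (X * Q * X * Q).trace := by
    simp only [Matrix.mul_assoc, hQQ]
    rw [trace_mul_comm]
    simp only [Matrix.mul_assoc, hQ.isIdempotentElem.eq]
  have htr : (Q * X * Q).trace = (X * Q).trace := by
    rw [Matrix.mul_assoc, trace_mul_comm, Matrix.mul_assoc, hQ.isIdempotentElem.eq]
  rw [← hsq, ← htr]
  exact (hQ.isSelfAdjoint.conjugate_nonneg hX).posSemidef.trace_mul_self_le_sq_trace

theorem trace_mul_mul_mul_one_sub_le {X P : Matrix m m ℝ} {c : ℝ} (hX : 0 ≤ X)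
    (hXc : X ≤ c • 1) (hP : IsStarProjection P) :
    (X * P * X * (1 - P)).trace ≤ c * (X * (1 - P)).trace := by
  have hXPX : X * P * X ≤ c • X :=
    calc X * P * X ≤ X * 1 * X := (IsSelfAdjoint.of_nonneg hX).conjugate_le_conjugate hP.le_one
      _ = X * X := by rw [Matrix.mul_one]
      _ ≤ c • X := mul_self_le_smul_of_le_smul_one hX hXc
  simpa only [smul_mul_assoc, trace_smul, smul_eq_mul] using
    trace_mul_le_trace_mul_of_le hXPX hP.one_sub_nonneg

theorem smul_one_sub_le_conjugate {S : Matrix m m ℝ} (hS : S.IsHermitian) {V : Matrix m r ℝ}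
    (hV : Vᵀ * V = 1) {T : ℝ}
    (hlow : ∀ x : m → ℝ, Vᵀ *ᵥ x = 0 → T * (x ⬝ᵥ x) ≤ x ⬝ᵥ (S *ᵥ x)) :
    T • (1 - V * Vᵀ) ≤ (1 - V * Vᵀ) * S * (1 - V * Vᵀ) := by
  set Q := 1 - V * Vᵀ
  have hQ : IsStarProjection Q := (isStarProjection_mul_transpose hV).one_sub
  have hQt : Qᵀ = Q := by rw [← conjTranspose_eq_transpose_of_trivial]; exact hQ.isSelfAdjoint
  have hVQ : Vᵀ * Q = 0 := by
    rw [Matrix.mul_sub, Matrix.mul_one, ← Matrix.mul_assoc, hV, Matrix.one_mul, sub_self]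
  have hquad : ∀ (A : Matrix m m ℝ) x,
      x ⬝ᵥ ((Q * A * Q) *ᵥ x) = (Q *ᵥ x) ⬝ᵥ (A *ᵥ (Q *ᵥ x)) := by
    intro A x
    rw [← mulVec_mulVec, ← mulVec_mulVec, dotProduct_mulVec, ← mulVec_transpose, hQt]
  refine PosSemidef.of_dotProduct_mulVec_nonneg ?_ fun x => ?_
  · have hQSQ := isHermitian_conjTranspose_mul_mul Q hS
    rw [← star_eq_conjTranspose, hQ.isSelfAdjoint.star_eq] at hQSQ
    exact hQSQ.sub ((IsSelfAdjoint.all T).smul hQ.isSelfAdjoint)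
  · have hxQx : x ⬝ᵥ (Q *ᵥ x) = (Q *ᵥ x) ⬝ᵥ (Q *ᵥ x) := by
      simpa only [Matrix.mul_one, hQ.isIdempotentElem.eq, one_mulVec] using hquad 1 x
    rw [star_trivial, sub_mulVec, dotProduct_sub, hquad, smul_mulVec, dotProduct_smul,
      smul_eq_mul, hxQx, sub_nonneg]
    exact hlow (Q *ᵥ x) (by rw [mulVec_mulVec, hVQ, zero_mulVec])

end Matrix

theorem frobNorm_eq_sqrt_trace {n : ℕ} (M : Matrix (Fin n) (Fin n) ℝ) :
    frobNorm M = √((Mᵀ * M).trace) := by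
  rw [frobNorm, trace, Finset.sum_comm]
  simp only [diag, mul_apply, transpose_apply, sq]

theorem frobNorm_sub_mul_mul {n : ℕ} {X P : Matrix (Fin n) (Fin n) ℝ} (hX : X.IsHermitian)
    (hP : IsStarProjection P) :
    frobNorm (X - P * X * P) =
      √(2 * (X * P * X * (1 - P)).trace + (X * (1 - P) * X * (1 - P)).trace) := by
  have hsymm : (X - P * X * P)ᵀ = X - P * X * P := by
    rw [← conjTranspose_eq_transpose_of_trivial]
    exact hX.isSelfAdjoint.sub (hX.isSelfAdjoint.conjugate_self hP.isSelfAdjoint)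
  rw [frobNorm_eq_sqrt_trace, hsymm, trace_mul_self_sub_mul_mul hP.isIdempotentElem]

theorem EuclideanSpace.norm_toLp {ι : Type*} [Fintype ι] (x : ι → ℝ) :
    ‖(WithLp.toLp 2 x : EuclideanSpace ℝ ι)‖ = √(∑ i, x i ^ 2) := by
  simp [EuclideanSpace.norm_eq]

theorem opNorm_eq_norm_toEuclideanCLM {n : ℕ} (M : Matrix (Fin n) (Fin n) ℝ) :
    opNorm M = ‖toEuclideanCLM (𝕜 := ℝ) M‖ := by
  rw [← ContinuousLinearMap.sSup_sphere_eq_norm, opNorm]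
  congr 1
  ext r
  constructor
  · rintro ⟨x, hx, rfl⟩
    exact ⟨WithLp.toLp 2 x, by simp [EuclideanSpace.norm_toLp, hx],
      by simp [toEuclideanCLM_toLp, EuclideanSpace.norm_toLp]⟩
  · rintro ⟨⟨x⟩, hx, rfl⟩
    rw [mem_sphere_zero_iff_norm, EuclideanSpace.norm_toLp, Real.sqrt_eq_one] at hx
    exact ⟨x, hx, by simp [toEuclideanCLM_toLp, EuclideanSpace.norm_toLp]⟩

theorem opNorm_nonneg {n : ℕ} (M : Matrix (Fin n) (Fin n) ℝ) : 0 ≤ opNorm M :=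
  opNorm_eq_norm_toEuclideanCLM M ▸ norm_nonneg _

theorem dotProduct_mulVec_le_opNorm_mul {n : ℕ} (M : Matrix (Fin n) (Fin n) ℝ)
    (x : Fin n → ℝ) : x ⬝ᵥ (M *ᵥ x) ≤ opNorm M * (x ⬝ᵥ x) := by
  set f := toEuclideanCLM (𝕜 := ℝ) M
  set y : EuclideanSpace ℝ (Fin n) := WithLp.toLp 2 x
  have hinner : x ⬝ᵥ (M *ᵥ x) = inner ℝ y (f y) := by
    simp [f, y, toEuclideanCLM_toLp, EuclideanSpace.inner_toLp_toLp, dotProduct_comm]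
  have hnorm : x ⬝ᵥ x = ‖y‖ ^ 2 := by
    rw [EuclideanSpace.norm_toLp, Real.sq_sqrt (by positivity)]
    simp [dotProduct, sq]
  rw [hinner, hnorm, opNorm_eq_norm_toEuclideanCLM]
  calc inner ℝ y (f y) ≤ ‖y‖ * ‖f y‖ := real_inner_le_norm _ _
    _ ≤ ‖y‖ * (‖f‖ * ‖y‖) := by gcongr; exact f.le_opNorm y
    _ = ‖f‖ * ‖y‖ ^ 2 := by ring

open scoped MatrixOrder in
theorem le_opNorm_smul_one {n : ℕ} {X : Matrix (Fin n) (Fin n) ℝ} (hX : X.IsHermitian) :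
    X ≤ opNorm X • 1 := by
  refine PosSemidef.of_dotProduct_mulVec_nonneg ?_ fun x => ?_
  · exact ((IsSelfAdjoint.all _).smul (IsSelfAdjoint.one _)).sub hX
  · rw [star_trivial, sub_mulVec, dotProduct_sub, smul_mulVec, one_mulVec, dotProduct_smul,
      smul_eq_mul, sub_nonneg]
    exact dotProduct_mulVec_le_opNorm_mul X x

theorem stmt11_general {n r : ℕ} (X S : Matrix (Fin n) (Fin n) ℝ)
    (hX : X.PosSemidef) (hS : S.PosSemidef)
    (V : Matrix (Fin n) (Fin r) ℝ) (hV : Vᵀ * V = 1)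
    (μ : Fin r → ℝ) (hEig : S * V = V * Matrix.diagonal μ)
    (T : ℝ) (hT : 0 < T)
    (hlow : ∀ x : Fin n → ℝ, Vᵀ *ᵥ x = 0 → T * (x ⬝ᵥ x) ≤ x ⬝ᵥ (S *ᵥ x))
    (ε : ℝ) (hε : ε = (X * S).trace) :
    frobNorm (X - V * (Vᵀ * X * V) * Vᵀ) ≤
      ε / T + Real.sqrt (2 * (ε / T) * opNorm X) := by
  open scoped MatrixOrder in
  set P := V * Vᵀ
  have hP : IsStarProjection P := isStarProjection_mul_transpose hV
  have hSP : Commute S (1 - P) :=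
    (Commute.one_right S).sub_right (commute_mul_transpose_of_mul_eq_mul_diagonal hS.1 hEig)
  have hTQ : T • (1 - P) ≤ S :=
    le_of_le_conjugate_of_commute hP.one_sub hSP hS.nonneg (smul_one_sub_le_conjugate hS.1 hV hlow)
  have hXQ : (X * (1 - P)).trace ≤ ε / T := by
    have h := trace_mul_le_trace_mul_of_le hTQ hX.nonneg
    rw [smul_mul_assoc, trace_smul, smul_eq_mul, trace_mul_comm S] at h
    rw [le_div_iff₀ hT, hε, trace_mul_comm X]
    linarith
  have hXPXQ := trace_mul_mul_mul_one_sub_le hX.nonneg (le_opNorm_smul_one hX.1) hP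
  have hXQXQ := trace_mul_mul_mul_le_sq_trace hX.nonneg hP.one_sub
  rw [show V * (Vᵀ * X * V) * Vᵀ = P * X * P by simp only [P, Matrix.mul_assoc],
    frobNorm_sub_mul_mul hX.1 hP]
  exact Real.sqrt_le_add_sqrt_of_le (by linarith)
    (trace_mul_nonneg_of_nonneg hX.nonneg hP.one_sub_nonneg) hXQ (opNorm_nonneg X)

theorem stmt11 {n r : ℕ} (X S : Matrix (Fin n) (Fin n) ℝ)
    (hX : X.PosSemidef) (hS : S.PosSemidef)
    (V : Matrix (Fin n) (Fin r) ℝ) (hV : Vᵀ * V = 1)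
    (μ : Fin r → ℝ) (hEig : S * V = V * Matrix.diagonal μ)
    (T : ℝ) (hT : 0 < T) (hμ : ∀ j, μ j ≤ T)
    (hlow : ∀ x : Fin n → ℝ, Vᵀ *ᵥ x = 0 → T * (x ⬝ᵥ x) ≤ x ⬝ᵥ (S *ᵥ x))
    (ε : ℝ) (hε : ε = (X * S).trace) :
    frobNorm (X - V * (Vᵀ * X * V) * Vᵀ) ≤
      ε / T + Real.sqrt (2 * (ε / T) * opNorm X) :=
  stmt11_general X S hX hS V hV μ hEig T hT hlow ε hε
end
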